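/- For d ≥ 2, a matrix-valued function F : ℝ^d → ℝ^{d×d} is isotropic (F(Q r) = Q F(r) Qᵀ for all orthogonal Q) if and only if there exist scalar functions λ, λ⊥ : ℝ≥0 → ℝ such that for all r ≠ 0, F(r) = λ(|r|²) P(r) + λ⊥(|r|²) P⊥(r), and F(0) is a multiple of the identity. In particular every isotropic matrix-valued function takes symmetric values. -/

import Mathlib

open Matrix

/-!
An isotropic `F` is determined by its values on the axis `ℝ e_k`: the sign flips and coordinate
swaps fixing `s e_k` force `F (s e_k)` to be diagonal, with one eigenvalue on `e_k` and a single
other eigenvalue on its orthogonal complement. The Householder reflection in `(s e_k - r)ᗮ` maps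
`s e_k` to any `r` with `|r| = s`, and conjugation by an orthogonal `Q` carries `P(y)` to
`P(Q y)`; this gives the representation, and conversely shows every such `F` is isotropic.
Symmetry of the values is then read off the representation.
-/

noncomputable def projOn {d : ℕ} (y : Fin d → ℝ) : Matrix (Fin d) (Fin d) ℝ :=
  (∑ i, y i ^ 2)⁻¹ • vecMulVec y y

noncomputable def projPerp {d : ℕ} (y : Fin d → ℝ) : Matrix (Fin d) (Fin d) ℝ :=
  1 - projOn y

lemma sum_sq_eq_dotProduct {n R : Type*} [Fintype n] [CommSemiring R] (y : n → R) :
    ∑ i, y i ^ 2 = y ⬝ᵥ y := by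
  simp [dotProduct, sq]

namespace Matrix

variable {n : Type*} [Fintype n] {Q : Matrix n n ℝ}

lemma dotProduct_mulVec_self_of_mul_transpose_eq_one [DecidableEq n] (hQ : Q * Qᵀ = 1) (y : n → ℝ) :
    Q *ᵥ y ⬝ᵥ Q *ᵥ y = y ⬝ᵥ y := by
  rw [dotProduct_mulVec, ← mulVec_transpose, mulVec_mulVec, mul_eq_one_comm.mp hQ, one_mulVec]

lemma mul_vecMulVec_mul_transpose (Q : Matrix n n ℝ) (x y : n → ℝ) :
    Q * vecMulVec x y * Qᵀ = vecMulVec (Q *ᵥ x) (Q *ᵥ y) := by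
  rw [mul_vecMulVec, vecMulVec_mul, vecMul_transpose]

end Matrix

section Projections

variable {d : ℕ}

lemma projOn_eq (y : Fin d → ℝ) : projOn y = (y ⬝ᵥ y)⁻¹ • vecMulVec y y := by
  rw [projOn, sum_sq_eq_dotProduct]

lemma transpose_projOn (y : Fin d → ℝ) : (projOn y)ᵀ = projOn y := by
  rw [projOn, transpose_smul, transpose_vecMulVec]

lemma transpose_projPerp (y : Fin d → ℝ) : (projPerp y)ᵀ = projPerp y := by
  rw [projPerp, transpose_sub, transpose_one, transpose_projOn]

lemma projOn_mul_self (y : Fin d → ℝ) : projOn y * projOn y = projOn y := by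
  rw [projOn_eq, smul_mul_smul_comm, vecMulVec_mul_vecMulVec, vecMulVec_smul, smul_smul]
  congr 1
  rcases eq_or_ne (y ⬝ᵥ y) 0 with h | h
  · simp [h]
  · field_simp

lemma projOn_mulVec (y x : Fin d → ℝ) : projOn y *ᵥ x = ((y ⬝ᵥ x) / (y ⬝ᵥ y)) • y := by
  rw [projOn_eq, smul_mulVec, vecMulVec_mulVec]
  simp [smul_smul, div_eq_inv_mul]

variable {Q : Matrix (Fin d) (Fin d) ℝ}

lemma conj_projOn (hQ : Q * Qᵀ = 1) (y : Fin d → ℝ) : Q * projOn y * Qᵀ = projOn (Q *ᵥ y) := by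
  rw [projOn_eq, projOn_eq, dotProduct_mulVec_self_of_mul_transpose_eq_one hQ,
    Matrix.mul_smul, Matrix.smul_mul, mul_vecMulVec_mul_transpose]

lemma conj_projPerp (hQ : Q * Qᵀ = 1) (y : Fin d → ℝ) :
    Q * projPerp y * Qᵀ = projPerp (Q *ᵥ y) := by
  rw [projPerp, projPerp, Matrix.mul_sub, Matrix.sub_mul, Matrix.mul_one, hQ, conj_projOn hQ]

lemma conj_smul_projOn_add_smul_projPerp (hQ : Q * Qᵀ = 1) (a b : ℝ) (y : Fin d → ℝ) :
    Q * (a • projOn y + b • projPerp y) * Qᵀ = a • projOn (Q *ᵥ y) + b • projPerp (Q *ᵥ y) := by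
  rw [Matrix.mul_add, Matrix.add_mul, Matrix.mul_smul, Matrix.smul_mul, Matrix.mul_smul,
    Matrix.smul_mul, conj_projOn hQ, conj_projPerp hQ]

lemma projOn_single (k : Fin d) {s : ℝ} (hs : s ≠ 0) : projOn (Pi.single k s) = single k k 1 := by
  ext i j
  rw [projOn_eq, single_dotProduct, Pi.single_eq_same, Matrix.smul_apply, vecMulVec_apply,
    single_apply]
  rcases eq_or_ne i k with rfl | hi
  · rcases eq_or_ne j i with rfl | hj
    · simp only [Pi.single_eq_same, if_true, and_self, smul_eq_mul]
      field_simp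
    · simp [hj, hj.symm]
  · simp [hi, hi.symm]

noncomputable def householder (y : Fin d → ℝ) : Matrix (Fin d) (Fin d) ℝ :=
  1 - (2 : ℝ) • projOn y

lemma householder_mul_transpose (y : Fin d → ℝ) : householder y * (householder y)ᵀ = 1 := by
  rw [householder, transpose_sub, transpose_one, transpose_smul, transpose_projOn, sub_mul,
    mul_sub, mul_sub, smul_mul_smul_comm, projOn_mul_self]
  simp only [Matrix.mul_one, Matrix.one_mul, Matrix.mul_smul]
  module

lemma householder_sub_mulVec {x y : Fin d → ℝ} (h : x ⬝ᵥ x = y ⬝ᵥ y) :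
    householder (x - y) *ᵥ x = y := by
  rw [householder, sub_mulVec, one_mulVec, smul_mulVec, projOn_mulVec, smul_smul]
  rcases eq_or_ne (x - y) 0 with hxy | hxy
  · rw [hxy, zero_dotProduct, zero_div, mul_zero, zero_smul, sub_zero]
    exact sub_eq_zero.mp hxy
  have hxy' : (x - y) ⬝ᵥ (x - y) = 2 * ((x - y) ⬝ᵥ x) := by
    simp only [sub_dotProduct, dotProduct_sub, dotProduct_comm y x, h]; ring
  have hx : (x - y) ⬝ᵥ x ≠ 0 := by
    intro h0
    rw [h0, mul_zero, dotProduct_self_eq_zero] at hxy'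
    exact hxy hxy'
  rw [hxy', show 2 * ((x - y) ⬝ᵥ x / (2 * (x - y) ⬝ᵥ x)) = 1 by field_simp, one_smul,
    sub_sub_cancel]

lemma exists_orthogonal_mulVec_eq {x y : Fin d → ℝ} (h : ∑ i, x i ^ 2 = ∑ i, y i ^ 2) :
    ∃ Q : Matrix (Fin d) (Fin d) ℝ, Q * Qᵀ = 1 ∧ Q *ᵥ x = y := by
  rw [sum_sq_eq_dotProduct, sum_sq_eq_dotProduct] at h
  exact ⟨_, householder_mul_transpose (x - y), householder_sub_mulVec h⟩

end Projections

def IsIsotropic {d : ℕ} (F : (Fin d → ℝ) → Matrix (Fin d) (Fin d) ℝ) : Prop :=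
  ∀ Q : Matrix (Fin d) (Fin d) ℝ, Q * Qᵀ = 1 → ∀ r, F (Q *ᵥ r) = Q * F r * Qᵀ

namespace IsIsotropic

variable {d : ℕ} {F : (Fin d → ℝ) → Matrix (Fin d) (Fin d) ℝ}

lemma apply_eq_zero_of_xor (hF : IsIsotropic F) {r : Fin d → ℝ} {m : Fin d} (hr : r m = 0)
    {i j : Fin d} (hij : Xor (i = m) (j = m)) : F r i j = 0 := by
  -- conjugating by the reflection `x m ↦ -x m`, which fixes `r`, negates the entry `F r i j`
  set ε : Fin d → ℝ := fun i => if i = m then -1 else 1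
  have hε : diagonal ε * (diagonal ε)ᵀ = 1 := by
    rw [diagonal_transpose, diagonal_mul_diagonal, ← diagonal_one]
    congr 1; ext i; by_cases hi : i = m <;> simp [ε, hi]
  have hεr : diagonal ε *ᵥ r = r := by
    ext i; by_cases hi : i = m <;> simp [mulVec_diagonal, ε, hi, hr]
  have := congrFun (congrFun (hF _ hε r) i) j
  rw [hεr, diagonal_transpose, mul_diagonal, diagonal_mul] at this
  rcases hij with ⟨rfl, hj⟩ | ⟨rfl, hi⟩ <;> simp [ε, *] at this <;> linarith

lemma apply_diag_eq (hF : IsIsotropic F) {r : Fin d → ℝ} {i j : Fin d} (hr : r i = r j) :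
    F r i i = F r j j := by
  have hσ : swap ℝ i j * (swap ℝ i j)ᵀ = 1 := by rw [transpose_swap, swap_mul_self]
  have hσr : swap ℝ i j *ᵥ r = r := by
    ext m; rw [swap_mulVec, Function.comp_apply, Equiv.swap_apply_def]; split_ifs <;> simp_all
  have := congrFun (congrFun (hF _ hσ r) i) i
  rwa [hσr, transpose_swap, mul_swap_apply_left, swap_mul_apply_left] at this

lemma apply_single_of_ne (hF : IsIsotropic F) (k : Fin d) (s : ℝ) {i j : Fin d} (hij : i ≠ j) :
    F (Pi.single k s) i j = 0 := by
  rcases eq_or_ne i k with rfl | hi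
  · exact hF.apply_eq_zero_of_xor (Pi.single_eq_of_ne hij.symm s) (.inr ⟨rfl, hij⟩)
  · exact hF.apply_eq_zero_of_xor (Pi.single_eq_of_ne hi s) (.inl ⟨rfl, hij.symm⟩)

lemma apply_zero (hF : IsIsotropic F) (k : Fin d) : F 0 = F 0 k k • 1 := by
  ext i j
  rcases eq_or_ne i j with rfl | hij
  · simp [hF.apply_diag_eq (r := 0) (i := i) (j := k) rfl]
  · simpa [one_apply_ne hij] using hF.apply_single_of_ne k 0 hij

lemma apply_single (hF : IsIsotropic F) {k l : Fin d} (hkl : k ≠ l) {s : ℝ} (hs : s ≠ 0) :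
    F (Pi.single k s) = F (Pi.single k s) k k • projOn (Pi.single k s) +
      F (Pi.single k s) l l • projPerp (Pi.single k s) := by
  rw [projPerp, projOn_single k hs]
  ext i j
  rcases eq_or_ne i j with rfl | hij
  · rcases eq_or_ne i k with rfl | hi
    · simp
    · have := hF.apply_diag_eq (r := Pi.single k s) (i := i) (j := l)
        (by rw [Pi.single_eq_of_ne hi, Pi.single_eq_of_ne hkl.symm])
      simp [single_apply_of_row_ne hi.symm, this]
  · have hk : ¬(k = i ∧ k = j) := fun h => hij (h.1 ▸ h.2)
    simp [hF.apply_single_of_ne k s hij, single_apply_of_ne (h := hk), one_apply_ne hij]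

lemma exists_eq_smul_projOn_add (hF : IsIsotropic F) {k l : Fin d} (hkl : k ≠ l) :
    ∃ lam lamPerp : ℝ → ℝ, ∀ r : Fin d → ℝ, r ≠ 0 →
      F r = lam (∑ i, r i ^ 2) • projOn r + lamPerp (∑ i, r i ^ 2) • projPerp r := by
  refine ⟨fun t => F (Pi.single k √t) k k, fun t => F (Pi.single k √t) l l, fun r hr => ?_⟩
  have ht : 0 < ∑ i, r i ^ 2 := by
    refine (Finset.sum_nonneg fun i _ => sq_nonneg (r i)).lt_of_ne' ?_
    rwa [sum_sq_eq_dotProduct, Ne, dotProduct_self_eq_zero]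
  generalize hrt : ∑ i, r i ^ 2 = t at ht ⊢
  obtain ⟨Q, hQ, hQr⟩ := exists_orthogonal_mulVec_eq (x := Pi.single k √t) (y := r)
    (by rw [hrt, sum_sq_eq_dotProduct, single_dotProduct, Pi.single_eq_same,
      Real.mul_self_sqrt ht.le])
  rw [← hQr, hF Q hQ, hF.apply_single hkl (Real.sqrt_pos.mpr ht).ne',
    conj_smul_projOn_add_smul_projPerp hQ]

end IsIsotropic

section Representation

variable {d : ℕ} {F : (Fin d → ℝ) → Matrix (Fin d) (Fin d) ℝ} {lam lamPerp : ℝ → ℝ} {κ : ℝ}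

lemma isIsotropic_of_eq_smul_projOn_add
    (h : ∀ r : Fin d → ℝ, r ≠ 0 →
      F r = lam (∑ i, r i ^ 2) • projOn r + lamPerp (∑ i, r i ^ 2) • projPerp r)
    (h0 : F 0 = κ • 1) : IsIsotropic F := by
  intro Q hQ r
  rcases eq_or_ne r 0 with rfl | hr
  · rw [mulVec_zero, h0, Matrix.mul_smul, Matrix.smul_mul, Matrix.mul_one, hQ]
  have hQr : Q *ᵥ r ≠ 0 := fun hQr => hr <| dotProduct_self_eq_zero.mp <| by
    rw [← dotProduct_mulVec_self_of_mul_transpose_eq_one hQ, hQr, zero_dotProduct]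
  rw [h _ hQr, h r hr, conj_smul_projOn_add_smul_projPerp hQ]
  simp only [sum_sq_eq_dotProduct, dotProduct_mulVec_self_of_mul_transpose_eq_one hQ]

lemma transpose_eq_of_eq_smul_projOn_add
    (h : ∀ r : Fin d → ℝ, r ≠ 0 →
      F r = lam (∑ i, r i ^ 2) • projOn r + lamPerp (∑ i, r i ^ 2) • projPerp r)
    (h0 : F 0 = κ • 1) (r : Fin d → ℝ) : (F r)ᵀ = F r := by
  rcases eq_or_ne r 0 with rfl | hr
  · rw [h0, transpose_smul, transpose_one]
  · rw [h r hr, transpose_add, transpose_smul, transpose_smul, transpose_projOn, transpose_projPerp]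

end Representation

theorem stmt8 {d : ℕ} (hd : 2 ≤ d) (F : (Fin d → ℝ) → Matrix (Fin d) (Fin d) ℝ) :
    ((∀ Q : Matrix (Fin d) (Fin d) ℝ, Q * Qᵀ = 1 →
        ∀ r, F (Q.mulVec r) = Q * F r * Qᵀ) ↔
      ((∃ lam lamPerp : ℝ → ℝ, ∀ r : Fin d → ℝ, r ≠ 0 →
          F r = lam (∑ i, r i ^ 2) • projOn r + lamPerp (∑ i, r i ^ 2) • projPerp r) ∧
        ∃ κ : ℝ, F 0 = κ • (1 : Matrix (Fin d) (Fin d) ℝ))) ∧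
    ((∀ Q : Matrix (Fin d) (Fin d) ℝ, Q * Qᵀ = 1 →
        ∀ r, F (Q.mulVec r) = Q * F r * Qᵀ) →
      ∀ r, (F r)ᵀ = F r) := by
  have hkl : (⟨0, by omega⟩ : Fin d) ≠ ⟨1, hd⟩ := by simp [Fin.ext_iff]
  have repr (hF : IsIsotropic F) :
      (∃ lam lamPerp : ℝ → ℝ, ∀ r : Fin d → ℝ, r ≠ 0 →
          F r = lam (∑ i, r i ^ 2) • projOn r + lamPerp (∑ i, r i ^ 2) • projPerp r) ∧
        ∃ κ : ℝ, F 0 = κ • (1 : Matrix (Fin d) (Fin d) ℝ) :=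
    ⟨hF.exists_eq_smul_projOn_add hkl, _, hF.apply_zero ⟨0, by omega⟩⟩
  refine ⟨⟨repr, fun ⟨⟨_, _, h⟩, _, h0⟩ => isIsotropic_of_eq_smul_projOn_add h h0⟩, fun hF => ?_⟩
  obtain ⟨⟨_, _, h⟩, _, h0⟩ := repr hF
  exact transpose_eq_of_eq_smul_projOn_add h h0
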